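/- Let T>0 and R>0. There exist constants C>0 and τ₀>0, depending only on R and T, such that for every integer n≥2 with τ=T/n≤τ₀ and every pair of vectors [s]ₙ,[g]ₙ∈ℝ^{n+1} with max(‖[s]ₙ‖²_{w²₂}, ‖[g]ₙ‖²_{w¹₂}) ≤ R², the interpolants sⁿ and gⁿ satisfy: sⁿ∈W²₂[0,T], gⁿ∈W¹₂[0,T], and max(‖sⁿ‖²_{W²₂[0,T]}, ‖gⁿ‖²_{W¹₂[0,T]}) ≤ max(‖[s]ₙ‖²_{w²₂}, ‖[g]ₙ‖²_{w¹₂}) + C·τ. -/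

import Mathlib

/-!
On each cell `[kτ, (k+1)τ]` the interpolants are polynomials whose coefficients are the discrete
data: `gⁿ` is affine with value `g_k` and slope `(g_{k+1} - g_k)/τ`, `(sⁿ)''` is the constant
`s_{t̄t,k}`, and `sⁿ` is quadratic with nodal value `(s_{k-1} + s_k)/2`. Integrating the squares
over a cell gives `τ` times the sum of the squared coefficients, up to `τ²` times the same sum, so
each continuous norm is at most `(1 + 4τ)` times the discrete one, except for the excess
`τ s₀²/2` of the squared nodal averages over the `s_k²`. A discrete Sobolev inequality bounds
`s₀²` in terms of `R` and `T` alone.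
-/

open MeasureTheory

lemma sum_Icc_one_eq_sum_range {M : Type*} [AddCommMonoid M] (f : ℕ → M) (n : ℕ) :
    ∑ k ∈ Finset.Icc 1 n, f k = ∑ k ∈ Finset.range n, f (k + 1) := by
  rw [← Finset.Ico_add_one_right_eq_Icc, Finset.sum_Ico_eq_sum_range]
  simp [add_comm]

noncomputable section

def diffQuot (τ : ℝ) (v : ℕ → ℝ) (k : ℕ) : ℝ := (v (k + 1) - v k) / τ

-- `k - 1` truncates at `0`: this encodes the convention `s₋₁ = s₀`, so `backDiff τ s 0 = 0`.
def backDiff (τ : ℝ) (s : ℕ → ℝ) (k : ℕ) : ℝ := (s k - s (k - 1)) / τ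

def stepFun (τ : ℝ) (c : ℕ → ℝ) (t : ℝ) : ℝ := c ⌊t / τ⌋₊

-- A primitive of the step function of slopes, so that continuity and the fundamental theorem of
-- calculus come for free; `linInterp_eq` shows that it interpolates linearly.
def linInterp (τ : ℝ) (v : ℕ → ℝ) (t : ℝ) : ℝ :=
  v 0 + ∫ u in (0 : ℝ)..t, stepFun τ (diffQuot τ v) u

def quadInterp (τ : ℝ) (s : ℕ → ℝ) (t : ℝ) : ℝ :=
  s 0 + ∫ u in (0 : ℝ)..t, linInterp τ (backDiff τ s) u

def gridNormSq (τ : ℝ) (n : ℕ) (v : ℕ → ℝ) : ℝ := ∑ k ∈ Finset.range n, τ * v k ^ 2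

def gridW22NormSq (τ : ℝ) (n : ℕ) (s : ℕ → ℝ) : ℝ :=
  gridNormSq τ n s + gridNormSq τ n (diffQuot τ s) + gridNormSq τ n (diffQuot τ (backDiff τ s))

def gridW12NormSq (τ : ℝ) (n : ℕ) (g : ℕ → ℝ) : ℝ :=
  gridNormSq τ n g + gridNormSq τ n (diffQuot τ g)

variable {τ : ℝ}

lemma diffQuot_backDiff (s : ℕ → ℝ) (k : ℕ) :
    diffQuot τ (backDiff τ s) k = (s (k + 1) - 2 * s k + s (k - 1)) / τ ^ 2 := by
  simp only [diffQuot, backDiff, Nat.add_sub_cancel]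
  ring

lemma gridW22NormSq_eq {n : ℕ} (hn : n ≠ 0) (s : ℕ → ℝ) :
    ∑ k ∈ Finset.range n, τ * (s k)^2
        + ∑ k ∈ Finset.Icc 1 n, τ * ((s k - s (k-1))/τ)^2
        + (τ * ((s 1 - s 0)/τ^2)^2
          + ∑ k ∈ Finset.Icc 1 (n-1), τ * ((s (k+1) - 2*s k + s (k-1))/τ^2)^2)
      = gridW22NormSq τ n s := by
  obtain ⟨m, rfl⟩ : ∃ m, n = m + 1 := ⟨n - 1, by omega⟩
  rw [gridW22NormSq, gridNormSq, gridNormSq, gridNormSq,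
    Finset.sum_range_succ' (fun k => τ * diffQuot τ (backDiff τ s) k ^ 2), sum_Icc_one_eq_sum_range,
    sum_Icc_one_eq_sum_range, Nat.add_sub_cancel]
  simp only [diffQuot_backDiff, Nat.add_sub_cancel, Nat.zero_sub]
  simp only [diffQuot]
  ring

lemma gridW12NormSq_eq (n : ℕ) (g : ℕ → ℝ) :
    ∑ k ∈ Finset.range n, τ * (g k)^2 + ∑ k ∈ Finset.Icc 1 n, τ * ((g k - g (k-1))/τ)^2
      = gridW12NormSq τ n g := by
  simp only [gridW12NormSq, gridNormSq, sum_Icc_one_eq_sum_range, diffQuot, Nat.add_sub_cancel]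

lemma gridNormSq_nonneg (hτ : 0 ≤ τ) (n : ℕ) (v : ℕ → ℝ) : 0 ≤ gridNormSq τ n v :=
  Finset.sum_nonneg fun _ _ => by positivity

lemma gridNormSq_backDiff_le (hτ : 0 ≤ τ) (n : ℕ) (s : ℕ → ℝ) :
    gridNormSq τ n (backDiff τ s) ≤ gridNormSq τ n (diffQuot τ s) := by
  rcases Nat.eq_zero_or_pos n with rfl | hn
  · simp [gridNormSq]
  obtain ⟨m, rfl⟩ : ∃ m, n = m + 1 := ⟨n - 1, by omega⟩
  have h0 : backDiff τ s 0 = 0 := by simp [backDiff]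
  rw [gridNormSq, Finset.sum_range_succ', h0, gridNormSq, Finset.sum_range_succ]
  simp only [backDiff, diffQuot, Nat.add_sub_cancel]
  nlinarith [mul_nonneg hτ (sq_nonneg ((s (m + 1) - s m) / τ))]

lemma gridNormSq_midpoints_le (hτ : 0 ≤ τ) (n : ℕ) (s : ℕ → ℝ) :
    gridNormSq τ n (fun k => (s (k - 1) + s k) / 2) ≤ gridNormSq τ n s + τ * s 0 ^ 2 / 2 := by
  have hshift : gridNormSq τ n (fun k => s (k - 1)) ≤ gridNormSq τ n s + τ * s 0 ^ 2 := by
    rcases Nat.eq_zero_or_pos n with rfl | hn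
    · simpa [gridNormSq] using mul_nonneg hτ (sq_nonneg (s 0))
    obtain ⟨m, rfl⟩ : ∃ m, n = m + 1 := ⟨n - 1, by omega⟩
    rw [gridNormSq, Finset.sum_range_succ', gridNormSq, Finset.sum_range_succ]
    simp only [Nat.add_sub_cancel, Nat.zero_sub]
    nlinarith [mul_nonneg hτ (sq_nonneg (s (m + 1)))]
  calc gridNormSq τ n (fun k => (s (k - 1) + s k) / 2)
      ≤ (gridNormSq τ n (fun k => s (k - 1)) + gridNormSq τ n s) / 2 := by
        rw [gridNormSq, gridNormSq, gridNormSq, ← Finset.sum_add_distrib, Finset.sum_div]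
        refine Finset.sum_le_sum fun k _ => ?_
        nlinarith [mul_nonneg hτ (sq_nonneg (s (k - 1) - s k))]
    _ ≤ gridNormSq τ n s + τ * s 0 ^ 2 / 2 := by linarith

lemma sq_sub_zero_le_gridNormSq_diffQuot (hτ : 0 < τ) (s : ℕ → ℝ) {k n : ℕ} (hk : k ≤ n) :
    (s k - s 0) ^ 2 ≤ (n * τ) * gridNormSq τ n (diffQuot τ s) := by
  have hstep : ∀ j, (s (j + 1) - s j) ^ 2 = τ * (τ * diffQuot τ s j ^ 2) := fun j => by
    rw [diffQuot]; field_simp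
  calc (s k - s 0) ^ 2 = (∑ j ∈ Finset.range k, (s (j + 1) - s j)) ^ 2 := by
        rw [Finset.sum_range_sub]
    _ ≤ k * ∑ j ∈ Finset.range k, (s (j + 1) - s j) ^ 2 := by
        simpa using sq_sum_le_card_mul_sum_sq (s := Finset.range k) (f := fun j => s (j + 1) - s j)
    _ = (k * τ) * gridNormSq τ k (diffQuot τ s) := by
        rw [gridNormSq, Finset.sum_congr rfl fun j _ => hstep j, ← Finset.mul_sum]; ring
    _ ≤ (n * τ) * gridNormSq τ n (diffQuot τ s) := by
        refine mul_le_mul (by gcongr) ?_ (gridNormSq_nonneg hτ.le k _) (by positivity)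
        exact Finset.sum_le_sum_of_subset_of_nonneg (Finset.range_subset_range.2 hk)
          fun _ _ _ => by positivity

lemma mul_sq_zero_le_gridNormSq (hτ : 0 < τ) (n : ℕ) (s : ℕ → ℝ) :
    (n * τ) * s 0 ^ 2 ≤ 2 * gridNormSq τ n s + 2 * (n * τ) ^ 2 * gridNormSq τ n (diffQuot τ s) := by
  have hk : ∀ k ∈ Finset.range n,
      τ * s 0 ^ 2 ≤ 2 * (τ * s k ^ 2) + τ * (2 * ((n * τ) * gridNormSq τ n (diffQuot τ s))) := by
    intro k hk
    have := sq_sub_zero_le_gridNormSq_diffQuot hτ s (Finset.mem_range.1 hk).le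
    nlinarith [sq_nonneg (s 0 - 2 * s k), mul_le_mul_of_nonneg_left this hτ.le]
  have := Finset.sum_le_sum hk
  rw [Finset.sum_add_distrib, ← Finset.mul_sum _ (fun k => τ * s k ^ 2), Finset.sum_const,
    Finset.card_range, nsmul_eq_mul, Finset.sum_const, Finset.card_range, nsmul_eq_mul] at this
  rw [gridNormSq]
  linarith

lemma stepFun_eq (hτ : 0 < τ) (c : ℕ → ℝ) {k : ℕ} {t : ℝ} (h₁ : k * τ ≤ t) (h₂ : t < (k + 1) * τ) :
    stepFun τ c t = c k := by
  rw [stepFun, (Nat.floor_eq_iff (div_nonneg ((by positivity : (0:ℝ) ≤ k * τ).trans h₁) hτ.le)).2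
    ⟨(le_div_iff₀ hτ).2 h₁, (div_lt_iff₀ hτ).2 h₂⟩]

lemma measurable_stepFun (τ : ℝ) (c : ℕ → ℝ) : Measurable (stepFun τ c) :=
  measurable_from_nat.comp (Nat.measurable_floor.comp (measurable_id.div_const τ))

lemma intervalIntegrable_stepFun (τ : ℝ) (c : ℕ → ℝ) (a b : ℝ) :
    IntervalIntegrable (stepFun τ c) volume a b := by
  set N := ⌊(|a| + |b|) / |τ|⌋₊
  refine IntervalIntegrable.mono_fun' (g := fun _ => ∑ j ∈ Finset.range (N + 1), |c j|)
    intervalIntegrable_const (measurable_stepFun τ c).aestronglyMeasurable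
    (ae_restrict_of_forall_mem measurableSet_uIoc fun t ht => ?_)
  have ht : |t| ≤ |a| + |b| := by
    rcases Set.mem_uIcc.1 (Set.uIoc_subset_uIcc ht) with h | h <;>
      exact abs_le.2 ⟨by linarith [neg_abs_le a, neg_abs_le b, abs_nonneg a, abs_nonneg b],
        by linarith [le_abs_self a, le_abs_self b, abs_nonneg a, abs_nonneg b]⟩
  have hfloor : ⌊t / τ⌋₊ ≤ N :=
    (Nat.floor_le_floor (le_abs_self _)).trans
      (Nat.floor_le_floor (by rw [abs_div]; exact div_le_div_of_nonneg_right ht (abs_nonneg τ)))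
  exact Finset.single_le_sum (f := fun j => |c j|) (fun _ _ => abs_nonneg _)
    (Finset.mem_range_succ_iff.2 hfloor)

lemma integral_stepFun_cell (hτ : 0 < τ) (c : ℕ → ℝ) {k : ℕ} {t : ℝ} (h₁ : k * τ ≤ t)
    (h₂ : t ≤ (k + 1) * τ) :
    ∫ u in (k * τ)..t, stepFun τ c u = c k * (t - k * τ) := by
  rw [intervalIntegral.integral_of_le h₁, integral_Ioc_eq_integral_Ioo,
    setIntegral_congr_fun measurableSet_Ioo (g := fun _ => c k)
      fun u hu => stepFun_eq hτ c hu.1.le (hu.2.trans_le h₂),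
    setIntegral_const, Real.volume_real_Ioo_of_le h₁, smul_eq_mul, mul_comm]

lemma integral_stepFun_nat_mul (hτ : 0 < τ) (c : ℕ → ℝ) (k : ℕ) :
    ∫ u in (0 : ℝ)..(k * τ), stepFun τ c u = τ * ∑ j ∈ Finset.range k, c j := by
  induction k with
  | zero => simp
  | succ k ih =>
    push_cast
    rw [← intervalIntegral.integral_add_adjacent_intervals (b := k * τ)
      (intervalIntegrable_stepFun τ c _ _) (intervalIntegrable_stepFun τ c _ _), ih,
      integral_stepFun_cell hτ c (by nlinarith) le_rfl, Finset.sum_range_succ]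
    ring

lemma linInterp_eq (hτ : 0 < τ) (v : ℕ → ℝ) {k : ℕ} {t : ℝ} (h₁ : k * τ ≤ t)
    (h₂ : t ≤ (k + 1) * τ) :
    linInterp τ v t = v k + diffQuot τ v k * (t - k * τ) := by
  have hsum : τ * ∑ j ∈ Finset.range k, diffQuot τ v j = v k - v 0 := by
    rw [Finset.mul_sum]
    simp only [diffQuot, mul_div_cancel₀ _ hτ.ne']
    exact Finset.sum_range_sub v k
  rw [linInterp, ← intervalIntegral.integral_add_adjacent_intervals (b := k * τ)
    (intervalIntegrable_stepFun τ _ _ _) (intervalIntegrable_stepFun τ _ _ _),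
    integral_stepFun_nat_mul hτ, hsum, integral_stepFun_cell hτ _ h₁ h₂]
  ring

lemma continuous_linInterp (τ : ℝ) (v : ℕ → ℝ) : Continuous (linInterp τ v) :=
  continuous_const.add
    (intervalIntegral.continuous_primitive (intervalIntegrable_stepFun τ _) 0)

lemma linInterp_sub (τ : ℝ) (v : ℕ → ℝ) (a b : ℝ) :
    linInterp τ v b - linInterp τ v a = ∫ u in a..b, stepFun τ (diffQuot τ v) u := by
  rw [linInterp, linInterp, add_sub_add_left_eq_sub,
    intervalIntegral.integral_interval_sub_left (intervalIntegrable_stepFun τ _ _ _)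
      (intervalIntegrable_stepFun τ _ _ _)]

lemma integral_affine (p q a t : ℝ) :
    ∫ u in a..t, (p + q * (u - a)) = p * (t - a) + q * (t - a) ^ 2 / 2 := by
  rw [intervalIntegral.integral_comp_sub_right (fun x => p + q * x), intervalIntegral.integral_add,
    intervalIntegral.integral_const_mul, integral_id] <;>
    try exact Continuous.intervalIntegrable (by fun_prop) _ _
  simp
  ring

lemma integral_linInterp_cell (hτ : 0 < τ) (v : ℕ → ℝ) {k : ℕ} {t : ℝ} (h₁ : k * τ ≤ t)
    (h₂ : t ≤ (k + 1) * τ) :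
    ∫ u in (k * τ)..t, linInterp τ v u
      = v k * (t - k * τ) + diffQuot τ v k * (t - k * τ) ^ 2 / 2 := by
  rw [intervalIntegral.integral_congr (g := fun u => v k + diffQuot τ v k * (u - k * τ))
    fun u hu => ?_, integral_affine]
  rw [Set.uIcc_of_le h₁] at hu
  exact linInterp_eq hτ v hu.1 (hu.2.trans h₂)

lemma hasDerivAt_quadInterp (τ : ℝ) (s : ℕ → ℝ) (t : ℝ) :
    HasDerivAt (quadInterp τ s) (linInterp τ (backDiff τ s) t) t :=
  ((continuous_linInterp τ _).integral_hasStrictDerivAt 0 t).hasDerivAt.const_add (s 0)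

lemma quadInterp_eq_add_integral (τ : ℝ) (s : ℕ → ℝ) (a b : ℝ) :
    quadInterp τ s b = quadInterp τ s a + ∫ u in a..b, linInterp τ (backDiff τ s) u := by
  rw [quadInterp, quadInterp, add_assoc, intervalIntegral.integral_add_adjacent_intervals
    ((continuous_linInterp τ _).intervalIntegrable _ _)
    ((continuous_linInterp τ _).intervalIntegrable _ _)]

lemma quadInterp_nat_mul (hτ : 0 < τ) (s : ℕ → ℝ) (k : ℕ) :
    quadInterp τ s (k * τ) = (s (k - 1) + s k) / 2 := by
  induction k with
  | zero => simp [quadInterp]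
  | succ k ih =>
    push_cast
    rw [quadInterp_eq_add_integral τ s (k * τ), ih,
      integral_linInterp_cell hτ _ (by nlinarith) le_rfl]
    simp only [diffQuot, backDiff, Nat.add_sub_cancel]
    field_simp
    ring

lemma quadInterp_eq (hτ : 0 < τ) (s : ℕ → ℝ) {k : ℕ} {t : ℝ} (h₁ : k * τ ≤ t)
    (h₂ : t ≤ (k + 1) * τ) :
    quadInterp τ s t = (s (k - 1) + s k) / 2 + backDiff τ s k * (t - k * τ)
      + diffQuot τ (backDiff τ s) k / 2 * (t - k * τ) ^ 2 := by
  rw [quadInterp_eq_add_integral τ s (k * τ), quadInterp_nat_mul hτ,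
    integral_linInterp_cell hτ _ h₁ h₂]
  ring

lemma quadInterp_of_mem_first_cell (hτ : 0 < τ) (s : ℕ → ℝ) {t : ℝ} (ht : t ∈ Set.Icc 0 τ) :
    quadInterp τ s t = s 0 + t ^ 2 / (2 * τ) * ((s 1 - s 0) / τ) := by
  rw [quadInterp_eq hτ s (k := 0) (by simpa using ht.1) (by simpa using ht.2)]
  simp only [diffQuot_backDiff, backDiff]
  field_simp
  ring

lemma quadInterp_of_mem_cell (hτ : 0 < τ) (s : ℕ → ℝ) {k : ℕ} (hk : 2 ≤ k) {t : ℝ}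
    (ht : t ∈ Set.Icc (((k : ℝ) - 1) * τ) (k * τ)) :
    quadInterp τ s t = s (k - 1) + (t - ((k : ℝ) - 1) * τ - τ / 2) * ((s (k - 1) - s (k - 2)) / τ)
      + (1 / 2) * (t - ((k : ℝ) - 1) * τ) ^ 2 * ((s k - 2 * s (k - 1) + s (k - 2)) / τ ^ 2) := by
  obtain ⟨m, rfl⟩ : ∃ m, k = m + 2 := ⟨k - 2, by omega⟩
  push_cast at ht ⊢
  rw [quadInterp_eq hτ s (k := m + 1) (by push_cast; linarith [ht.1])
    (by push_cast; linarith [ht.2])]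
  simp only [diffQuot_backDiff, backDiff, Nat.add_sub_cancel]
  push_cast
  field_simp
  ring

lemma linInterp_of_mem_cell (hτ : 0 < τ) (v : ℕ → ℝ) {k : ℕ} (hk : 1 ≤ k) {t : ℝ}
    (ht : t ∈ Set.Icc (((k : ℝ) - 1) * τ) (k * τ)) :
    linInterp τ v t = v (k - 1) + (v k - v (k - 1)) / τ * (t - ((k : ℝ) - 1) * τ) := by
  obtain ⟨m, rfl⟩ : ∃ m, k = m + 1 := ⟨k - 1, by omega⟩
  push_cast at ht ⊢
  rw [linInterp_eq hτ v (k := m) (by linarith [ht.1]) (by linarith [ht.2])]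
  simp only [diffQuot, add_sub_cancel_right]

lemma continuous_quadInterp (τ : ℝ) (s : ℕ → ℝ) : Continuous (quadInterp τ s) :=
  continuous_iff_continuousAt.2 fun t => (hasDerivAt_quadInterp τ s t).continuousAt

lemma stepFun_sq (τ : ℝ) (c : ℕ → ℝ) :
    (fun t => stepFun τ c t ^ 2) = stepFun τ (fun k => c k ^ 2) := rfl

lemma intervalIntegrable_sq_stepFun (τ : ℝ) (c : ℕ → ℝ) (a b : ℝ) :
    IntervalIntegrable (fun t => stepFun τ c t ^ 2) volume a b :=
  intervalIntegrable_stepFun τ (fun k => c k ^ 2) a b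

lemma intervalIntegrable_sq_of_continuous {f : ℝ → ℝ} (hf : Continuous f) (a b : ℝ) :
    IntervalIntegrable (fun t => f t ^ 2) volume a b :=
  (hf.pow 2).intervalIntegrable a b

lemma integral_sq_quadratic (A B C h : ℝ) :
    ∫ x in (0 : ℝ)..h, (A + B * x + C * x ^ 2) ^ 2
      = A ^ 2 * h + A * B * h ^ 2 + (B ^ 2 + 2 * A * C) * h ^ 3 / 3 + B * C * h ^ 4 / 2
        + C ^ 2 * h ^ 5 / 5 := by
  have hexpand : (fun x : ℝ => (A + B * x + C * x ^ 2) ^ 2) = fun x => A ^ 2 + 2 * A * B * x ^ 1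
      + (B ^ 2 + 2 * A * C) * x ^ 2 + 2 * B * C * x ^ 3 + C ^ 2 * x ^ 4 := by
    funext x; ring
  rw [hexpand, intervalIntegral.integral_add, intervalIntegral.integral_add,
    intervalIntegral.integral_add, intervalIntegral.integral_add] <;>
    try exact Continuous.intervalIntegrable (by fun_prop) _ _
  simp only [intervalIntegral.integral_const_mul, integral_pow, intervalIntegral.integral_const]
  simp
  ring

lemma integral_sq_le_of_eqOn_quadratic {f : ℝ → ℝ} {a b A B C : ℝ} (hab : a ≤ b) (hba : b - a ≤ 1)
    (hf : ∀ u ∈ Set.Icc a b, f u = A + B * (u - a) + C * (u - a) ^ 2) :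
    ∫ u in a..b, f u ^ 2 ≤ (b - a) * A ^ 2 + 2 * (b - a) ^ 2 * (A ^ 2 + B ^ 2 + C ^ 2) := by
  rw [intervalIntegral.integral_congr (g := fun u => (fun x => (A + B * x + C * x ^ 2) ^ 2) (u - a))
      fun u hu => by rw [Set.uIcc_of_le hab] at hu; simp only [hf u hu],
    intervalIntegral.integral_comp_sub_right (fun x => (A + B * x + C * x ^ 2) ^ 2), sub_self,
    integral_sq_quadratic]
  set h := b - a
  have h0 : 0 ≤ h := sub_nonneg.2 hab
  have h3 : h ^ 3 ≤ h ^ 2 := pow_le_pow_of_le_one h0 hba (by norm_num)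
  have h4 : h ^ 4 ≤ h ^ 2 := pow_le_pow_of_le_one h0 hba (by norm_num)
  have h5 : h ^ 5 ≤ h ^ 2 := pow_le_pow_of_le_one h0 hba (by norm_num)
  nlinarith [mul_nonneg (sq_nonneg (A - B)) (pow_nonneg h0 2),
    mul_nonneg (sq_nonneg (A - C)) (pow_nonneg h0 3),
    mul_nonneg (sq_nonneg (B - C)) (pow_nonneg h0 4),
    mul_nonneg (sub_nonneg.2 h3) (by positivity : 0 ≤ A ^ 2 + B ^ 2 + C ^ 2),
    mul_nonneg (sub_nonneg.2 h4) (by positivity : 0 ≤ B ^ 2 + C ^ 2),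
    mul_nonneg (sub_nonneg.2 h5) (sq_nonneg C)]

lemma integral_le_sum_cells {f : ℝ → ℝ} (hf : ∀ a b, IntervalIntegrable f volume a b) (n : ℕ)
    {b : ℕ → ℝ} (hb : ∀ k < n, ∫ t in (k * τ)..((k + 1) * τ), f t ≤ b k) :
    ∫ t in (0 : ℝ)..(n * τ), f t ≤ ∑ k ∈ Finset.range n, b k := by
  have hsum := intervalIntegral.sum_integral_adjacent_intervals (a := fun k : ℕ => k * τ)
    (n := n) (μ := volume) (f := f) fun k _ => hf _ _
  simp only [Nat.cast_zero, zero_mul, Nat.cast_add, Nat.cast_one] at hsum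
  rw [← hsum]
  exact Finset.sum_le_sum fun k hk => hb k (Finset.mem_range.1 hk)

lemma integral_cell_linInterp_le (hτ : 0 < τ) (hτ1 : τ ≤ 1) (v : ℕ → ℝ) (k : ℕ) :
    ∫ t in (k * τ)..((k + 1) * τ), (linInterp τ v t ^ 2 + stepFun τ (diffQuot τ v) t ^ 2)
      ≤ (1 + 2 * τ) * (τ * v k ^ 2 + τ * diffQuot τ v k ^ 2) := by
  have hlen : (k + 1) * τ - k * τ = τ := by ring
  have hL := integral_sq_le_of_eqOn_quadratic (f := linInterp τ v) (A := v k)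
    (B := diffQuot τ v k) (C := 0) (by linarith)
    (hlen ▸ hτ1) fun u hu => by rw [linInterp_eq hτ v hu.1 hu.2]; ring
  have hS : ∫ t in (k * τ)..((k + 1) * τ), stepFun τ (diffQuot τ v) t ^ 2
      = diffQuot τ v k ^ 2 * τ := by
    rw [stepFun_sq, integral_stepFun_cell hτ _ (by linarith) le_rfl, hlen]
  rw [intervalIntegral.integral_add
    (intervalIntegrable_sq_of_continuous (continuous_linInterp τ v) _ _)
    (intervalIntegrable_sq_stepFun τ _ _ _), hS]
  rw [hlen] at hL
  nlinarith [mul_nonneg (sq_nonneg τ) (sq_nonneg (v k))]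

lemma integral_cell_quadInterp_le (hτ : 0 < τ) (hτ1 : τ ≤ 1) (s : ℕ → ℝ) (k : ℕ) :
    ∫ t in (k * τ)..((k + 1) * τ), (quadInterp τ s t ^ 2 + linInterp τ (backDiff τ s) t ^ 2
        + stepFun τ (diffQuot τ (backDiff τ s)) t ^ 2)
      ≤ (1 + 4 * τ) * (τ * ((s (k - 1) + s k) / 2) ^ 2 + τ * backDiff τ s k ^ 2
        + τ * diffQuot τ (backDiff τ s) k ^ 2) := by
  have hlen : (k + 1) * τ - k * τ = τ := by ring
  have hQ := integral_sq_le_of_eqOn_quadratic (f := quadInterp τ s) (by linarith)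
    (hlen ▸ hτ1) fun u hu => quadInterp_eq hτ s hu.1 hu.2
  have hLS := integral_cell_linInterp_le hτ hτ1 (backDiff τ s) k
  simp only [add_assoc]
  rw [intervalIntegral.integral_add
    (intervalIntegrable_sq_of_continuous (continuous_quadInterp τ s) _ _)
    ((intervalIntegrable_sq_of_continuous (continuous_linInterp τ _) _ _).add
      (intervalIntegrable_sq_stepFun τ _ _ _))]
  rw [hlen] at hQ
  nlinarith [mul_nonneg (sq_nonneg τ) (sq_nonneg ((s (k - 1) + s k) / 2)),
    mul_nonneg (sq_nonneg τ) (sq_nonneg (diffQuot τ (backDiff τ s) k))]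

lemma integral_linInterp_norm_le (hτ : 0 < τ) (hτ1 : τ ≤ 1) (n : ℕ) (g : ℕ → ℝ) :
    ∫ t in (0 : ℝ)..(n * τ), (linInterp τ g t ^ 2 + stepFun τ (diffQuot τ g) t ^ 2)
      ≤ (1 + 2 * τ) * gridW12NormSq τ n g := by
  refine (integral_le_sum_cells (fun a b =>
    (intervalIntegrable_sq_of_continuous (continuous_linInterp τ g) a b).add
      (intervalIntegrable_sq_stepFun τ _ a b)) n
    fun k _ => integral_cell_linInterp_le hτ hτ1 g k).trans_eq ?_
  rw [gridW12NormSq, gridNormSq, gridNormSq, ← Finset.sum_add_distrib, Finset.mul_sum]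

lemma integral_quadInterp_norm_le (hτ : 0 < τ) (hτ1 : τ ≤ 1) (n : ℕ) (s : ℕ → ℝ) :
    ∫ t in (0 : ℝ)..(n * τ), (quadInterp τ s t ^ 2 + linInterp τ (backDiff τ s) t ^ 2
        + stepFun τ (diffQuot τ (backDiff τ s)) t ^ 2)
      ≤ (1 + 4 * τ) * (gridW22NormSq τ n s + τ * s 0 ^ 2 / 2) := by
  refine (integral_le_sum_cells (fun a b =>
    ((intervalIntegrable_sq_of_continuous (continuous_quadInterp τ s) a b).add
      (intervalIntegrable_sq_of_continuous (continuous_linInterp τ _) a b)).add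
      (intervalIntegrable_sq_stepFun τ _ a b)) n
    fun k _ => integral_cell_quadInterp_le hτ hτ1 s k).trans ?_
  rw [← Finset.mul_sum]
  gcongr
  have hM := gridNormSq_midpoints_le hτ.le n s
  have hw := gridNormSq_backDiff_le hτ.le n s
  simp only [gridW22NormSq, gridNormSq, Finset.sum_add_distrib] at hM hw ⊢
  linarith

lemma integral_linInterp_norm_le_add (hτ : 0 < τ) (hτ1 : τ ≤ 1) (n : ℕ) (g : ℕ → ℝ) {R : ℝ}
    (hg : gridW12NormSq τ n g ≤ R ^ 2) :
    ∫ t in (0 : ℝ)..(n * τ), (linInterp τ g t ^ 2 + stepFun τ (diffQuot τ g) t ^ 2)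
      ≤ gridW12NormSq τ n g + 2 * R ^ 2 * τ :=
  (integral_linInterp_norm_le hτ hτ1 n g).trans
    (by nlinarith [mul_le_mul_of_nonneg_left hg hτ.le])

lemma integral_quadInterp_norm_le_add (hτ : 0 < τ) (hτ1 : τ ≤ 1) (n : ℕ) (s : ℕ → ℝ) {R K : ℝ}
    (hs : gridW22NormSq τ n s ≤ R ^ 2) (hs0 : s 0 ^ 2 ≤ K) :
    ∫ t in (0 : ℝ)..(n * τ), (quadInterp τ s t ^ 2 + linInterp τ (backDiff τ s) t ^ 2
        + stepFun τ (diffQuot τ (backDiff τ s)) t ^ 2)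
      ≤ gridW22NormSq τ n s + (4 * R ^ 2 + 3 * K) * τ := by
  have hK : 0 ≤ K := (sq_nonneg _).trans hs0
  refine (integral_quadInterp_norm_le hτ hτ1 n s).trans ?_
  nlinarith [mul_le_mul_of_nonneg_left hs0 hτ.le, mul_le_mul_of_nonneg_left hs hτ.le,
    mul_le_mul_of_nonneg_left hs0 (mul_nonneg hτ.le hτ.le),
    mul_le_mul_of_nonneg_right (mul_le_of_le_one_left hτ.le hτ1) hK]

lemma sq_zero_le_of_gridW22NormSq_le (hτ : 0 < τ) {n : ℕ} (hn : n ≠ 0) (s : ℕ → ℝ) {R : ℝ}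
    (h : gridW22NormSq τ n s ≤ R ^ 2) :
    s 0 ^ 2 ≤ (2 * R ^ 2 + 2 * (n * τ) ^ 2 * R ^ 2) / (n * τ) := by
  have hs := gridNormSq_nonneg hτ.le n s
  have hds := gridNormSq_nonneg hτ.le n (diffQuot τ s)
  have hdds := gridNormSq_nonneg hτ.le n (diffQuot τ (backDiff τ s))
  rw [gridW22NormSq] at h
  rw [le_div_iff₀ (by positivity), mul_comm]
  nlinarith [mul_sq_zero_le_gridNormSq hτ n s,
    mul_le_mul_of_nonneg_left (by linarith : gridNormSq τ n (diffQuot τ s) ≤ R ^ 2)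
      (sq_nonneg ((n : ℝ) * τ))]

end

/-- Lemma 2.3, inequality (2.20): the interpolants `sⁿ, gⁿ` of discrete control
vectors with discrete norms bounded by `R²` belong to `W²₂[0,T] × W¹₂[0,T]`, and for
sufficiently small `τ = T/n` their continuous norms exceed the discrete ones by at most `Cτ`. -/
theorem stmt_7 (T R : ℝ) (hT : 0 < T) (hR : 0 < R) :
    ∃ C > (0:ℝ), ∃ τ₀ > (0:ℝ), ∀ n : ℕ, 2 ≤ n → ∀ τ : ℝ, τ = T / n → τ ≤ τ₀ →
      ∀ sv gv : ℕ → ℝ,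
      max
        (∑ k ∈ Finset.range n, τ * (sv k)^2
          + ∑ k ∈ Finset.Icc 1 n, τ * ((sv k - sv (k-1))/τ)^2
          + (τ * ((sv 1 - sv 0)/τ^2)^2
              + ∑ k ∈ Finset.Icc 1 (n-1), τ * ((sv (k+1) - 2*sv k + sv (k-1))/τ^2)^2))
        (∑ k ∈ Finset.range n, τ * (gv k)^2
          + ∑ k ∈ Finset.Icc 1 n, τ * ((gv k - gv (k-1))/τ)^2) ≤ R^2 →
      ∃ sn sn' sn'' gn gn' : ℝ → ℝ,
        -- sⁿ is the quadratic interpolant of [s]ₙ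
        (∀ t ∈ Set.Icc (0:ℝ) τ, sn t = sv 0 + t^2/(2*τ) * ((sv 1 - sv 0)/τ)) ∧
        (∀ k ∈ Finset.Icc 2 n, ∀ t ∈ Set.Icc (((k:ℝ)-1)*τ) ((k:ℝ)*τ),
          sn t = sv (k-1) + (t - ((k:ℝ)-1)*τ - τ/2) * ((sv (k-1) - sv (k-2))/τ)
               + (1/2)*(t - ((k:ℝ)-1)*τ)^2 * ((sv k - 2*sv (k-1) + sv (k-2))/τ^2)) ∧
        -- gⁿ is the piecewise linear interpolant of [g]ₙ
        (∀ k ∈ Finset.Icc 1 n, ∀ t ∈ Set.Icc (((k:ℝ)-1)*τ) ((k:ℝ)*τ),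
          gn t = gv (k-1) + (gv k - gv (k-1))/τ * (t - ((k:ℝ)-1)*τ)) ∧
        -- sⁿ ∈ W²₂[0,T]
        (∀ t ∈ Set.Icc (0:ℝ) T, HasDerivAt sn (sn' t) t) ∧
        IntervalIntegrable sn'' volume 0 T ∧
        IntervalIntegrable (fun t => (sn'' t)^2) volume 0 T ∧
        (∀ a b : ℝ, 0 ≤ a → a ≤ b → b ≤ T → sn' b - sn' a = ∫ t in a..b, sn'' t) ∧
        -- gⁿ ∈ W¹₂[0,T]
        IntervalIntegrable gn' volume 0 T ∧
        IntervalIntegrable (fun t => (gn' t)^2) volume 0 T ∧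
        (∀ a b : ℝ, 0 ≤ a → a ≤ b → b ≤ T → gn b - gn a = ∫ t in a..b, gn' t) ∧
        -- the norm estimate (2.20)
        max (∫ t in (0:ℝ)..T, ((sn t)^2 + (sn' t)^2 + (sn'' t)^2))
            (∫ t in (0:ℝ)..T, ((gn t)^2 + (gn' t)^2))
          ≤ max
              (∑ k ∈ Finset.range n, τ * (sv k)^2
                + ∑ k ∈ Finset.Icc 1 n, τ * ((sv k - sv (k-1))/τ)^2
                + (τ * ((sv 1 - sv 0)/τ^2)^2
                    + ∑ k ∈ Finset.Icc 1 (n-1), τ * ((sv (k+1) - 2*sv k + sv (k-1))/τ^2)^2))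
              (∑ k ∈ Finset.range n, τ * (gv k)^2
                + ∑ k ∈ Finset.Icc 1 n, τ * ((gv k - gv (k-1))/τ)^2)
            + C * τ := by
  set K := (2 * R ^ 2 + 2 * T ^ 2 * R ^ 2) / T
  refine ⟨4 * R ^ 2 + 3 * K, by positivity, 1, one_pos, ?_⟩
  intro n hn τ hτ hτ1 sv gv hbound
  have hnτ : (n : ℝ) * τ = T := by rw [hτ]; field_simp
  have hτ0 : 0 < τ := pos_of_mul_pos_right (hnτ ▸ hT) n.cast_nonneg
  rw [gridW22NormSq_eq (by omega), gridW12NormSq_eq] at hbound ⊢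
  have hW2 := (le_max_left _ _).trans hbound
  have hs0 : sv 0 ^ 2 ≤ K := by
    simpa only [hnτ] using sq_zero_le_of_gridW22NormSq_le hτ0 (by omega) sv hW2
  refine ⟨quadInterp τ sv, linInterp τ (backDiff τ sv), stepFun τ (diffQuot τ (backDiff τ sv)),
    linInterp τ gv, stepFun τ (diffQuot τ gv), fun t ht => quadInterp_of_mem_first_cell hτ0 sv ht,
    fun k hk t ht => quadInterp_of_mem_cell hτ0 sv (Finset.mem_Icc.1 hk).1 ht,
    fun k hk t ht => linInterp_of_mem_cell hτ0 gv (Finset.mem_Icc.1 hk).1 ht,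
    fun t _ => hasDerivAt_quadInterp τ sv t,
    intervalIntegrable_stepFun τ _ 0 T, intervalIntegrable_sq_stepFun τ _ 0 T,
    fun a b _ _ _ => linInterp_sub τ _ a b, intervalIntegrable_stepFun τ _ 0 T,
    intervalIntegrable_sq_stepFun τ _ 0 T, fun a b _ _ _ => linInterp_sub τ gv a b, ?_⟩
  rw [← hnτ]
  refine max_le ((integral_quadInterp_norm_le_add hτ0 hτ1 n sv hW2 hs0).trans ?_)
    ((integral_linInterp_norm_le_add hτ0 hτ1 n gv ((le_max_right _ _).trans hbound)).trans ?_)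
  · gcongr
    exact le_max_left _ _
  · have hK : 0 ≤ K := (sq_nonneg _).trans hs0
    nlinarith [le_max_right (gridW22NormSq τ n sv) (gridW12NormSq τ n gv), mul_nonneg hK hτ0.le]
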